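/- Let a PFA with n ≥ 4 states carefully synchronize some subset of size 4 of its state set. Then for every subset S of size 3 of the state set which is carefully synchronized by some word, the shortest word carefully synchronizing S has length strictly less than C(n,3) + C(n,2), where C denotes the binomial coefficient. -/

import Mathlib

/-- Action of a PFA (partial) transition function on a subset of states along a word:
one step maps `S` to `{δ q a : q ∈ S}` if `δ q a` is defined for all `q ∈ S`,
and to `∅` otherwise. -/
def pfaRun {n m : ℕ} (δ : Fin n → Fin m → Option (Fin n)) :
    Finset (Fin n) → List (Fin m) → Finset (Fin n)
  | S, [] => S
  | S, a :: w =>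
      pfaRun δ
        (if ∀ q ∈ S, (δ q a).isSome then S.image (fun q => (δ q a).getD q) else ∅) w

/-- A word `w` carefully synchronizes the subset `S` in the PFA `δ`. -/
def pfaSync {n m : ℕ} (δ : Fin n → Fin m → Option (Fin n)) (S : Finset (Fin n))
    (w : List (Fin m)) : Prop :=
  (pfaRun δ S w).card = 1

/-- `l` is the length of a shortest word carefully synchronizing `S` in the PFA `δ`. -/
def pfaShortestSync {n m : ℕ} (δ : Fin n → Fin m → Option (Fin n)) (S : Finset (Fin n))
    (l : ℕ) : Prop :=
  (∃ w, pfaSync δ S w ∧ w.length = l) ∧ ∀ w, pfaSync δ S w → l ≤ w.length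

/-!
Let `w` be a shortest word carefully synchronizing a 3-set `S`. The sets `S · (w.take i)` for
`i < |w|` are pairwise distinct (otherwise cut out the factor between two equal ones) and have
2 or 3 elements, so `|w| ≤ C(n,3) + C(n,2)`. Suppose equality holds: then every 2-set and every
3-set occurs exactly once along the run. A carefully synchronizable 4-set yields a letter `a`
defined on a 4-set `{p, q, r, s}` with `p · a = q · a`. Both `{p, q, r}` and `{p, q, s}` occur
along the run; applying `a` at the earlier of them gives a set of at most 2 states strictly before
the later 3-set, and jumping to the occurrence of that set shortens `w`.
-/

open Finset

section

variable {n m : ℕ} (δ : Fin n → Fin m → Option (Fin n))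

def pfaStep (S : Finset (Fin n)) (a : Fin m) : Finset (Fin n) :=
  if ∀ q ∈ S, (δ q a).isSome then S.image (fun q => (δ q a).getD q) else ∅

lemma pfaRun_cons (S : Finset (Fin n)) (a : Fin m) (w : List (Fin m)) :
    pfaRun δ S (a :: w) = pfaRun δ (pfaStep δ S a) w := rfl

lemma pfaRun_singleton (S : Finset (Fin n)) (a : Fin m) :
    pfaRun δ S [a] = pfaStep δ S a := rfl

lemma pfaStep_of_forall_isSome {S : Finset (Fin n)} {a : Fin m}
    (h : ∀ q ∈ S, (δ q a).isSome) : pfaStep δ S a = S.image (fun q => (δ q a).getD q) :=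
  if_pos h

lemma pfaRun_append (S : Finset (Fin n)) (u v : List (Fin m)) :
    pfaRun δ S (u ++ v) = pfaRun δ (pfaRun δ S u) v := by
  induction u generalizing S with
  | nil => rfl
  | cons a u ih => exact ih _

lemma pfaRun_empty (w : List (Fin m)) : pfaRun δ ∅ w = ∅ := by
  induction w with
  | nil => rfl
  | cons a w ih => simpa [pfaRun_cons, pfaStep] using ih

lemma card_pfaStep_le (S : Finset (Fin n)) (a : Fin m) : #(pfaStep δ S a) ≤ #S := by
  unfold pfaStep
  split
  · exact card_image_le
  · simp

lemma card_pfaRun_le (S : Finset (Fin n)) (w : List (Fin m)) : #(pfaRun δ S w) ≤ #S := by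
  induction w generalizing S with
  | nil => exact le_rfl
  | cons a w ih => exact (ih _).trans (card_pfaStep_le δ S a)

lemma card_pfaRun_take_antitone (S : Finset (Fin n)) (w : List (Fin m)) {i j : ℕ} (hij : i ≤ j) :
    #(pfaRun δ S (w.take j)) ≤ #(pfaRun δ S (w.take i)) := by
  rw [← List.take_append_drop i (w.take j), List.take_take, min_eq_left hij, pfaRun_append]
  exact card_pfaRun_le ..

lemma exists_merging_letter {S : Finset (Fin n)} {w : List (Fin m)} (hw : pfaSync δ S w)
    (hS : 1 < #S) :
    ∃ (B : Finset (Fin n)) (a : Fin m), #B = #S ∧ (∀ q ∈ B, (δ q a).isSome) ∧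
      #(B.image fun q => (δ q a).getD q) < #B := by
  induction w generalizing S with
  | nil => exact absurd hw hS.ne'
  | cons a w ih =>
    by_cases hdef : ∀ q ∈ S, (δ q a).isSome
    · rcases (card_image_le (s := S) (f := fun q => (δ q a).getD q)).lt_or_eq with hlt | heq
      · exact ⟨S, a, rfl, hdef, hlt⟩
      · have hw' : pfaSync δ (pfaStep δ S a) w := hw
        rw [pfaStep_of_forall_isSome δ hdef] at hw'
        obtain ⟨B, b, hB, hrest⟩ := ih hw' (heq ▸ hS)
        exact ⟨B, b, hB.trans heq, hrest⟩
    · have hw' : #(pfaRun δ ∅ w) = 1 := by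
        simpa [pfaSync, pfaRun_cons, pfaStep, hdef] using hw
      simp [pfaRun_empty] at hw'

end

def nontrivialSubsetsOfCardLE (n k : ℕ) : Finset (Finset (Fin n)) := {T | 1 < #T ∧ #T ≤ k}

lemma card_nontrivialSubsetsOfCardLE_three (n : ℕ) :
    #(nontrivialSubsetsOfCardLE n 3) = n.choose 3 + n.choose 2 := by
  have : nontrivialSubsetsOfCardLE n 3 = univ.powersetCard 3 ∪ univ.powersetCard 2 := by
    ext T
    simp only [nontrivialSubsetsOfCardLE, mem_filter, mem_univ, true_and, mem_union,
      mem_powersetCard, subset_univ]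
    omega
  rw [this, card_union_of_disjoint, card_powersetCard, card_powersetCard, card_univ,
    Fintype.card_fin]
  exact disjoint_left.mpr fun T h3 h2 => by
    rw [mem_powersetCard] at h3 h2
    omega

section ShortestSync

variable {n m : ℕ} {δ : Fin n → Fin m → Option (Fin n)} {S : Finset (Fin n)} {w : List (Fin m)}

variable (hw : pfaSync δ S w) (hmin : ∀ v, pfaSync δ S v → w.length ≤ v.length)
include hw hmin

lemma le_length_of_pfaRun_eq_take {u : List (Fin m)} {j : ℕ}
    (hj : j ≤ w.length) (h : pfaRun δ S u = pfaRun δ S (w.take j)) : j ≤ u.length := by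
  have hsync : pfaSync δ S (u ++ w.drop j) := by
    rwa [pfaSync, pfaRun_append, h, ← pfaRun_append, List.take_append_drop]
  have := hmin _ hsync
  simp only [List.length_append, List.length_drop] at this
  omega

lemma pfaRun_take_injOn : Set.InjOn (fun i => pfaRun δ S (w.take i)) (Set.Iic w.length) := by
  intro i hi j hj hij
  have h₁ := le_length_of_pfaRun_eq_take hw hmin hj hij
  have h₂ := le_length_of_pfaRun_eq_take hw hmin hi hij.symm
  simp only [List.length_take] at h₁ h₂
  simp only [Set.mem_Iic] at hi hj
  omega

lemma one_lt_card_pfaRun_take {i : ℕ} (hi : i < w.length) : 1 < #(pfaRun δ S (w.take i)) := by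
  have hne : pfaRun δ S (w.take i) ≠ ∅ := by
    intro h
    have : #(pfaRun δ S w) = 1 := hw
    rw [← List.take_append_drop i w, pfaRun_append, h, pfaRun_empty] at this
    simp at this
  have h1 : #(pfaRun δ S (w.take i)) ≠ 1 := fun h => by
    have := hmin _ h
    simp only [List.length_take] at this
    omega
  have := card_pos.mpr (nonempty_iff_ne_empty.mpr hne)
  omega

lemma card_image_pfaRun_take :
    #((range w.length).image fun i => pfaRun δ S (w.take i)) = w.length := by
  rw [card_image_of_injOn, card_range]
  exact (pfaRun_take_injOn hw hmin).mono fun i hi => Set.mem_Iic.mpr (mem_range.mp hi).le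

lemma image_pfaRun_take_subset :
    (range w.length).image (fun i => pfaRun δ S (w.take i)) ⊆
      nontrivialSubsetsOfCardLE n #S := by
  simp only [image_subset_iff, mem_range, nontrivialSubsetsOfCardLE, mem_filter, mem_univ,
    true_and]
  exact fun i hi => ⟨one_lt_card_pfaRun_take hw hmin hi, card_pfaRun_le δ S _⟩

lemma length_le_card_nontrivialSubsetsOfCardLE : w.length ≤ #(nontrivialSubsetsOfCardLE n #S) :=
  card_image_pfaRun_take hw hmin ▸ card_le_card (image_pfaRun_take_subset hw hmin)

lemma exists_pfaRun_take_eq_of_length_eq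
    (hl : w.length = #(nontrivialSubsetsOfCardLE n #S))
    {T : Finset (Fin n)} (hT : 1 < #T) (hTS : #T ≤ #S) :
    ∃ i < w.length, pfaRun δ S (w.take i) = T := by
  have himage := eq_of_subset_of_card_le (image_pfaRun_take_subset hw hmin)
    (by rw [card_image_pfaRun_take hw hmin, hl])
  have hmem : T ∈ (range w.length).image fun i => pfaRun δ S (w.take i) := by
    rw [himage]
    simp [nontrivialSubsetsOfCardLE, hT, hTS]
  simpa using hmem

lemma lt_length_of_card_pfaRun_lt (hl : w.length = #(nontrivialSubsetsOfCardLE n #S))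
    {u : List (Fin m)} {i : ℕ} (hi : i < w.length) (hpos : 0 < #(pfaRun δ S u))
    (hlt : #(pfaRun δ S u) < #(pfaRun δ S (w.take i))) : i < u.length := by
  rcases hpos.nat_succ_le.eq_or_lt with h1 | h1
  · exact hi.trans_le (hmin u h1.symm)
  · obtain ⟨j, hj, hju⟩ := exists_pfaRun_take_eq_of_length_eq hw hmin hl h1
      (card_pfaRun_le δ S u)
    have hij : i < j := by
      by_contra! hji
      have := card_pfaRun_take_antitone δ S w hji
      rw [hju] at this
      omega
    exact hij.trans_le (le_length_of_pfaRun_eq_take hw hmin hj.le hju.symm)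

lemma length_ne_card_of_merging_letter (hS : #S = 3) {B : Finset (Fin n)} {a : Fin m}
    (hB : #B = 4) (hdef : ∀ q ∈ B, (δ q a).isSome)
    (hmerge : #(B.image fun q => (δ q a).getD q) < #B) :
    w.length ≠ #(nontrivialSubsetsOfCardLE n #S) := by
  intro hl
  obtain ⟨p, hp, q, hq, hpq, hpq'⟩ := exists_ne_map_eq_of_card_image_lt hmerge
  have no_merge_before_triple : ∀ x ∈ B, ∀ i i', pfaRun δ S (w.take i) = {x, p, q} →
      i < i' → i' < w.length → #(pfaRun δ S (w.take i')) = 3 → False := by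
    intro x hx i i' hi hii' hi' h3
    have hxpq : ({x, p, q} : Finset (Fin n)) ⊆ B := by simp [insert_subset_iff, hx, hp, hq]
    have hrun : pfaRun δ S (w.take i ++ [a]) =
        {(δ x a).getD x, (δ q a).getD q} := by
      rw [pfaRun_append, hi, pfaRun_singleton,
        pfaStep_of_forall_isSome δ fun q hq => hdef q (hxpq hq)]
      simp [hpq']
    have := lt_length_of_card_pfaRun_lt hw hmin hl hi' (u := w.take i ++ [a])
      (by simp [hrun]) (by rw [hrun, h3]; exact card_le_two.trans_lt (by norm_num))
    simp only [List.length_append, List.length_take, List.length_singleton] at this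
    omega
  have hpqB : ({p, q} : Finset (Fin n)) ⊆ B := by simp [insert_subset_iff, hp, hq]
  obtain ⟨r, s, hrs, hBrs⟩ := card_eq_two.mp <| by
    rw [card_sdiff_of_subset hpqB, card_pair hpq, hB]
  have hr : r ∈ B \ {p, q} := by simp [hBrs]
  have hs : s ∈ B \ {p, q} := by simp [hBrs]
  simp only [mem_sdiff, mem_insert, mem_singleton, not_or] at hr hs
  have hcard : ∀ x, x ≠ p → x ≠ q → #({x, p, q} : Finset (Fin n)) = 3 := fun x hxp hxq => by
    rw [card_insert_of_notMem (by simp [hxp, hxq]), card_pair hpq]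
  obtain ⟨i, hi, hfi⟩ := exists_pfaRun_take_eq_of_length_eq hw hmin hl
    (hcard r hr.2.1 hr.2.2 ▸ by norm_num) (hS ▸ (hcard r hr.2.1 hr.2.2).le)
  obtain ⟨j, hj, hfj⟩ := exists_pfaRun_take_eq_of_length_eq hw hmin hl
    (hcard s hs.2.1 hs.2.2 ▸ by norm_num) (hS ▸ (hcard s hs.2.1 hs.2.2).le)
  rcases lt_trichotomy i j with hij | rfl | hji
  · exact no_merge_before_triple r hr.1 i j hfi hij hj (hfj ▸ hcard s hs.2.1 hs.2.2)
  · have : r ∈ ({s, p, q} : Finset (Fin n)) := by simp [← hfj, hfi]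
    simp [hrs, hr.2.1, hr.2.2] at this
  · exact no_merge_before_triple s hs.1 j i hfj hji hi (hfi ▸ hcard r hr.2.1 hr.2.2)

end ShortestSync

theorem stmt7_general (n m : ℕ) (δ : Fin n → Fin m → Option (Fin n))
    (h4 : ∃ S4 : Finset (Fin n), S4.card = 4 ∧ ∃ w, pfaSync δ S4 w) :
    ∀ (S : Finset (Fin n)) (l : ℕ), S.card = 3 → pfaShortestSync δ S l →
      l < n.choose 3 + n.choose 2 := by
  rintro S l hS ⟨⟨w, hw, rfl⟩, hmin⟩
  obtain ⟨S4, hS4, w4, hw4⟩ := h4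
  obtain ⟨B, a, hB, hdef, hmerge⟩ := exists_merging_letter δ hw4 (by omega)
  have hle := length_le_card_nontrivialSubsetsOfCardLE hw hmin
  have hne := length_ne_card_of_merging_letter hw hmin hS (hB.trans hS4) hdef hmerge
  rw [hS, card_nontrivialSubsetsOfCardLE_three] at hle hne
  exact hle.lt_of_ne hne

theorem stmt7 (n m : ℕ) (hn : 4 ≤ n) (δ : Fin n → Fin m → Option (Fin n))
    (h4 : ∃ S4 : Finset (Fin n), S4.card = 4 ∧ ∃ w, pfaSync δ S4 w) :
    ∀ (S : Finset (Fin n)) (l : ℕ), S.card = 3 → pfaShortestSync δ S l →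
      l < n.choose 3 + n.choose 2 :=
  stmt7_general n m δ h4
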